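/- arXiv:1611.08672 — 7 statements merged into one kernel-verified Lean document; each statement's English description precedes it below -/
import Mathlib

section
/- The multiplicative group of any semifield is torsion-free. -/
/-- A semifield structure: an auxiliary addition `⊕` on a multiplicative abelian
group which is commutative, associative, and distributive over multiplication. -/
structure IsSemifieldAux (P : Type*) [CommGroup P] (add : P → P → P) : Prop where
  comm : ∀ a b : P, add a b = add b a
  assoc : ∀ a b c : P, add (add a b) c = add a (add b c)
  distrib : ∀ a b c : P, a * add b c = add (a * b) (a * c)

/-- Auxiliary sequence: `gseq add p n = p ⊕ p² ⊕ ⋯ ⊕ p^(n+1)`. -/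
def gseq {P : Type*} [CommGroup P] (add : P → P → P) (p : P) : ℕ → P
  | 0 => p
  | n + 1 => add (gseq add p n) (p ^ (n + 2))

lemma gseq_key {P : Type*} [CommGroup P] {add : P → P → P}
    (h : IsSemifieldAux P add) (p : P) :
    ∀ n, add p (p * gseq add p n) = gseq add p (n + 1) := by
  intro n
  induction n with
  | zero =>
    simp only [gseq]
    rw [show p * p = p ^ 2 from (sq p).symm]
  | succ n ih =>
    simp only [gseq] at *
    rw [h.distrib, ← h.assoc, ih,
      show p * p ^ (n + 2) = p ^ (n + 3) from (pow_succ' p (n+2)).symm]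

/-- the multiplicative group of any semifield is torsion-free:
if `p ^ m = 1` for some positive integer `m`, then `p = 1`. -/
theorem semifield_torsion_free (P : Type*) [CommGroup P] (add : P → P → P)
    (h : IsSemifieldAux P add) :
    ∀ (p : P) (m : ℕ), 0 < m → p ^ m = 1 → p = 1 := by
  intro p m hm hpm
  match m, hm, hpm with
  | 1, _, hpm => simpa using hpm
  | (n + 2), _, hpm =>
    set s : P := add 1 (gseq add p n) with hs
    have key : p * s = s := by
      calc p * s = add p (p * gseq add p n) := by
            rw [hs, h.distrib, mul_one]
        _ = gseq add p (n + 1) := gseq_key h p n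
        _ = add (gseq add p n) (p ^ (n + 2)) := rfl
        _ = s := by rw [hpm, h.comm]
    have : p * s = 1 * s := by rw [one_mul, key]
    exact mul_right_cancel this
end

section
/- Let B be an n×n integer matrix, k ∈ {1,…,n}, and let μ_k denote the standard matrix mutation in direction k. For a positive integer diagonal matrix R = diag(r_1,…,r_n), let μ_k^g denote the generalized matrix mutation in direction k (with the factors r_k). Then μ_k(BR) = μ_k^g(B)·R. -/
open Matrix

/-- The standard matrix mutation `μ_k` in direction `k`, where `[a]₊ = max a 0`. -/
def stdMut {n : ℕ} (k : Fin n) (B : Matrix (Fin n) (Fin n) ℤ) :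
    Matrix (Fin n) (Fin n) ℤ :=
  Matrix.of fun i j =>
    if i = k ∨ j = k then -B i j
    else B i j + B i k * max (-B k j) 0 + max (B i k) 0 * B k j

/-- The generalized matrix mutation `μ_k^g` in direction `k`, with parameters `r`. -/
def genMut {n : ℕ} (r : Fin n → ℤ) (k : Fin n)
    (B : Matrix (Fin n) (Fin n) ℤ) : Matrix (Fin n) (Fin n) ℤ :=
  Matrix.of fun i j =>
    if i = k ∨ j = k then -B i j
    else B i j + r k * (B i k * max (-B k j) 0 + max (B i k) 0 * B k j)

/-- `μ_k(B·R) = μ_k^g(B)·R` for `R = diag(r_1,…,r_n)` with positive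
integer entries. -/
theorem stdMut_mul_diagonal_eq_genMut_mul (n : ℕ) (r : Fin n → ℤ) (hr : ∀ i, 0 < r i)
    (k : Fin n) (B : Matrix (Fin n) (Fin n) ℤ) :
    stdMut k (B * Matrix.diagonal r) = genMut r k B * Matrix.diagonal r := by
  ext i j
  simp only [stdMut, genMut, Matrix.mul_diagonal, Matrix.of_apply]
  split
  · ring
  · have h1 : max (-(B k j * r j)) 0 = max (-B k j) 0 * r j := by
      rw [max_mul_of_nonneg _ _ (hr j).le, zero_mul, neg_mul]
    have h2 : max (B i k * r k) 0 = max (B i k) 0 * r k := by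
      rw [max_mul_of_nonneg _ _ (hr k).le, zero_mul]
    rw [h1, h2]; ring
end

section
/- Let B be an n×n integer skew-symmetrizable matrix, R = diag(r_i) and S positive integer diagonal matrices such that SRB is skew-symmetric, and let B̄ = μ_k^g(B) be the generalized matrix mutation of B in direction k. Then for either sign ε ∈ {+,−}, E_k^ε · (B̄ R^{-1} S^{-1}) · (E_k^ε)^⊤ = B R^{-1} S^{-1}, where E_k^ε is the matrix with e_{il} = δ_{il} for l ≠ k, e_{kk} = −1, and e_{ik} = [ε b_{ik}]_+ r_k for i ≠ k. -/
open Matrix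

/-- The matrix `E_k^ε` (over ℚ): identity except in column `k`, where `e_{kk} = -1`
and `e_{ik} = [ε b_{ik}]₊ · r_k` for `i ≠ k`. -/
def Emat {n : ℕ} (r : Fin n → ℤ) (B : Matrix (Fin n) (Fin n) ℤ) (k : Fin n) (ε : ℤ) :
    Matrix (Fin n) (Fin n) ℚ :=
  Matrix.of fun i l =>
    if l ≠ k then (if i = l then 1 else 0)
    else if i = k then -1 else ((max (ε * B i k) 0 * r k : ℤ) : ℚ)

/-!
With `D = R⁻¹S⁻¹`, the skew-symmetry of `SRB` is the skew-symmetry of `BD`, so `b_kk = 0` and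
`[ε b_jk]₊ d_k = [-ε b_kj]₊ d_j` (as `D` is positive). Conjugation by `E_k^ε` negates row and
column `k` and adds `[ε b_ik]₊ r_k` times row (column) `k` to row (column) `i`; entrywise this undoes
the mutation, since for `ε = ±1` the mutation term satisfies
`a [-b]₊ + [a]₊ b = [ε a]₊ b + [-ε b]₊ a`.
-/

section PositivePart

variable {α : Type*} [CommRing α] [LinearOrder α] [IsStrictOrderedRing α]

lemma mul_max_neg_add_max_mul_eq {ε : α} (hε : ε = 1 ∨ ε = -1) (a b : α) :
    a * max (-b) 0 + max a 0 * b = max (ε * a) 0 * b + max (-ε * b) 0 * a := by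
  have ha : max a 0 - max (-a) 0 = a := max_zero_sub_max_neg_zero_eq_self a
  have hb : max b 0 - max (-b) 0 = b := max_zero_sub_max_neg_zero_eq_self b
  rcases hε with rfl | rfl
  · simp only [one_mul, neg_one_mul]
    ring
  · simp only [neg_one_mul, neg_neg, one_mul]
    linear_combination (-a) * hb + b * ha

lemma max_mul_eq_max_neg_mul_of_mul_eq_neg (ε : α) {a b x y : α} (hx : 0 ≤ x) (hy : 0 ≤ y)
    (h : a * x = -(b * y)) : max (ε * a) 0 * x = max (-ε * b) 0 * y := by
  rw [max_mul_of_nonneg _ _ hx, max_mul_of_nonneg _ _ hy, zero_mul, zero_mul]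
  congr 1
  linear_combination ε * h

end PositivePart

lemma transpose_mul_diagonal_inv_eq_neg {ι K : Type*} [Fintype ι] [DecidableEq ι] [Field K]
    {w : ι → K} (hw : ∀ i, w i ≠ 0) {A : Matrix ι ι K}
    (h : (diagonal w * A)ᵀ = -(diagonal w * A)) : (A * diagonal w⁻¹)ᵀ = -(A * diagonal w⁻¹) := by
  have hA : A * diagonal w⁻¹ = diagonal w⁻¹ * (diagonal w * A) * diagonal w⁻¹ := by
    rw [← Matrix.mul_assoc, diagonal_mul_diagonal]
    simp [hw]
  rw [hA, transpose_mul, transpose_mul, h, diagonal_transpose, Matrix.neg_mul, Matrix.mul_neg]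
  simp only [Matrix.mul_assoc]

section Emat

variable {n : ℕ} (r : Fin n → ℤ) (B : Matrix (Fin n) (Fin n) ℤ) (k : Fin n) (ε : ℤ)

lemma Emat_mul_apply {m : Type*} (M : Matrix (Fin n) m ℚ) (i : Fin n) (j : m) :
    (Emat r B k ε * M) i j =
      if i = k then -M k j else M i j + ((max (ε * B i k) 0 * r k : ℤ) : ℚ) * M k j := by
  rw [mul_apply, ← Finset.sum_erase_add _ _ (Finset.mem_univ k)]
  have hoff : ∀ p ∈ Finset.univ.erase k,
      Emat r B k ε i p * M p j = if i = p then M p j else 0 := by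
    intro p hp
    simp [Emat, (Finset.mem_erase.mp hp).1]
  rw [Finset.sum_congr rfl hoff, Finset.sum_ite_eq]
  by_cases h : i = k <;> simp [Emat, h]

lemma mul_Emat_transpose_apply {m : Type*} (M : Matrix m (Fin n) ℚ) (i : m) (j : Fin n) :
    (M * (Emat r B k ε)ᵀ) i j =
      if j = k then -M i k else M i j + ((max (ε * B j k) 0 * r k : ℤ) : ℚ) * M i k := by
  rw [← transpose_transpose M, ← transpose_mul, transpose_apply, Emat_mul_apply]
  rfl

end Emat

lemma genMut_apply_of_ne {n : ℕ} (r : Fin n → ℤ) {k i j : Fin n} (B : Matrix (Fin n) (Fin n) ℤ)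
    (hi : i ≠ k) (hj : j ≠ k) :
    genMut r k B i j = B i j + r k * (B i k * max (-B k j) 0 + max (B i k) 0 * B k j) := by
  simp [genMut, hi, hj]

lemma genMut_apply_of_eq_or_eq {n : ℕ} (r : Fin n → ℤ) {k i j : Fin n}
    (B : Matrix (Fin n) (Fin n) ℤ) (h : i = k ∨ j = k) : genMut r k B i j = -B i j := by
  simp [genMut, h]

lemma Emat_conj_genMut_mul_diagonal {n : ℕ} (r : Fin n → ℤ) (B : Matrix (Fin n) (Fin n) ℤ)
    (k : Fin n) {ε : ℤ} (hε : ε = 1 ∨ ε = -1) {d : Fin n → ℚ} (hd : ∀ i, 0 ≤ d i)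
    (hskew : (B.map (Int.cast : ℤ → ℚ) * diagonal d)ᵀ = -(B.map (Int.cast : ℤ → ℚ) * diagonal d)) :
    Emat r B k ε * ((genMut r k B).map (Int.cast : ℤ → ℚ) * diagonal d) * (Emat r B k ε)ᵀ =
      B.map (Int.cast : ℤ → ℚ) * diagonal d := by
  have hBd : ∀ i j, (B j i : ℚ) * d i = -((B i j : ℚ) * d j) := fun i j => by
    simpa [mul_diagonal] using congrFun₂ hskew i j
  have hkk : (B k k : ℚ) * d k = 0 := by linarith [hBd k k]
  have hrow : ∀ j, genMut r k B k j = -B k j := fun j => genMut_apply_of_eq_or_eq r B (.inl rfl)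
  have hcol : ∀ i, genMut r k B i k = -B i k := fun i => genMut_apply_of_eq_or_eq r B (.inr rfl)
  ext i j
  rw [mul_Emat_transpose_apply, Emat_mul_apply, Emat_mul_apply]
  simp only [mul_diagonal, map_apply]
  by_cases hik : i = k <;> by_cases hjk : j = k
  · subst hik hjk
    simp only [↓reduceIte, hrow]
    push_cast
    linear_combination (-2) * hkk
  · subst hik
    simp only [↓reduceIte, hjk, hrow]
    push_cast
    linear_combination max ((ε : ℚ) * B j i) 0 * r i * hkk
  · subst hjk
    simp only [↓reduceIte, hik, hrow, hcol]
    push_cast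
    linear_combination max ((ε : ℚ) * B i j) 0 * r j * hkk
  · simp only [hik, hjk, ↓reduceIte, hrow, hcol, genMut_apply_of_ne r B hik hjk]
    have hswap := max_mul_eq_max_neg_mul_of_mul_eq_neg (ε : ℚ) (hd k) (hd j) (hBd k j)
    have hsign := congrArg (Int.cast : ℤ → ℚ) (mul_max_neg_add_max_mul_eq hε (B i k) (B k j))
    push_cast at hsign ⊢
    linear_combination (r k : ℚ) * d j * hsign - (r k * B i k : ℚ) * hswap -
      (r k : ℚ) ^ 2 * max ((ε : ℚ) * B i k) 0 * max ((ε : ℚ) * B j k) 0 * hkk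

/-- `E_k^ε · (B̄ R⁻¹ S⁻¹) · (E_k^ε)ᵀ = B R⁻¹ S⁻¹` where `B̄ = μ_k^g(B)`,
for either sign `ε`, with `S`, `R` positive integer diagonal and `S·R·B` skew-symmetric. -/
theorem Emat_conj_genMut (n : ℕ) (r s : Fin n → ℤ) (hr : ∀ i, 0 < r i) (hs : ∀ i, 0 < s i)
    (B : Matrix (Fin n) (Fin n) ℤ)
    (hskew : (Matrix.diagonal s * Matrix.diagonal r * B)ᵀ =
      -(Matrix.diagonal s * Matrix.diagonal r * B))
    (k : Fin n) (ε : ℤ) (hε : ε = 1 ∨ ε = -1) :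
    Emat r B k ε *
        ((genMut r k B).map (Int.cast : ℤ → ℚ) *
          (Matrix.diagonal fun i => ((r i : ℚ))⁻¹) *
          (Matrix.diagonal fun i => ((s i : ℚ))⁻¹)) *
        (Emat r B k ε)ᵀ =
      B.map (Int.cast : ℤ → ℚ) * (Matrix.diagonal fun i => ((r i : ℚ))⁻¹) *
        (Matrix.diagonal fun i => ((s i : ℚ))⁻¹) := by
  have hsr : ∀ i, ((s i * r i : ℤ) : ℚ) ≠ 0 := fun i => by
    exact_mod_cast (mul_pos (hs i) (hr i)).ne'
  have hdiag : (diagonal fun i => ((r i : ℚ))⁻¹) * (diagonal fun i => ((s i : ℚ))⁻¹) =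
      diagonal (fun i => ((s i * r i : ℤ) : ℚ))⁻¹ := by
    rw [diagonal_mul_diagonal]
    congr 1
    ext i
    push_cast
    rw [Pi.inv_apply, mul_inv, mul_comm]
  have hskewQ : (diagonal (fun i => ((s i * r i : ℤ) : ℚ)) * B.map (Int.cast : ℤ → ℚ))ᵀ =
      -(diagonal (fun i => ((s i * r i : ℤ) : ℚ)) * B.map (Int.cast : ℤ → ℚ)) := by
    rw [diagonal_mul_diagonal] at hskew
    have h := congrArg (Int.castRingHom ℚ).mapMatrix hskew
    rw [map_neg, RingHom.mapMatrix_apply, RingHom.mapMatrix_apply, transpose_map, Matrix.map_mul,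
      diagonal_map (map_zero _)] at h
    exact h
  rw [Matrix.mul_assoc ((genMut r k B).map _), Matrix.mul_assoc (B.map _), hdiag]
  exact Emat_conj_genMut_mul_diagonal r B k hε
    (fun i => inv_nonneg.2 (Int.cast_nonneg (mul_pos (hs i) (hr i)).le))
    (transpose_mul_diagonal_inv_eq_neg hsr hskewQ)
end

section
/- Let Σ_u = (X_u, Y_u, B_u) and Σ_v = μ_k(Σ_u) be seeds of an (R,Z)-cluster pattern related by mutation in direction k, and let S be the R-skew-balance (so SRB_t is skew-symmetric for all t). Let H = H_u^v(X) be the matrix with entries H_{il} = (x_{i;u}/x_{l;v})·∂x_{l;v}/∂x_{i;u}. Then H·(B_v R^{-1} S^{-1})·H^⊤ = B_u R^{-1} S^{-1} and det(H) = −1. -/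
/-- The matrix `H_u^v(X)` at a point `p`, with `(i,l)`-entry
`(x_{i;u}/x_{l;v}) ∂x_{l;v}/∂x_{i;u}`, the `u`-cluster being the coordinates. -/
noncomputable def Hmat {n : ℕ} (X' : Fin n → (Fin n → ℝ) → ℝ) (p : Fin n → ℝ) :
    Matrix (Fin n) (Fin n) ℝ :=
  Matrix.of fun i l => p i / X' l p * fderiv ℝ (X' l) p (Pi.single i 1)

namespace Matrix

variable {ι α : Type*} [Fintype ι] [DecidableEq ι] [CommRing α]

theorem one_updateCol_mul_apply (k : ι) (h : ι → α) (M : Matrix ι ι α) (i j : ι) :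
    ((1 : Matrix ι ι α).updateCol k h * M) i j = h i * M k j + if i = k then 0 else M i j := by
  have hterm : ∀ l, (1 : Matrix ι ι α).updateCol k h i l * M l j =
      (if l = k then h i * M k j else 0) + if l = i then (if i = k then 0 else M i j) else 0 := by
    intro l
    by_cases hlk : l = k <;> by_cases hli : l = i <;> simp_all [updateCol_apply, eq_comm]
  simp [mul_apply, hterm, Finset.sum_add_distrib]

theorem mul_transpose_one_updateCol_apply (k : ι) (h : ι → α) (M : Matrix ι ι α) (i j : ι) :
    (M * ((1 : Matrix ι ι α).updateCol k h)ᵀ) i j = h j * M i k + if j = k then 0 else M i j := by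
  rw [← transpose_apply (M * _), transpose_mul, transpose_transpose, one_updateCol_mul_apply]
  rfl

theorem one_updateCol_mul_mul_transpose_apply (k : ι) (h : ι → α) (M : Matrix ι ι α) (i j : ι) :
    ((1 : Matrix ι ι α).updateCol k h * M * ((1 : Matrix ι ι α).updateCol k h)ᵀ) i j =
      h i * h j * M k k + h j * (if i = k then 0 else M i k) +
        h i * (if j = k then 0 else M k j) + if i = k ∨ j = k then 0 else M i j := by
  rw [mul_transpose_one_updateCol_apply, one_updateCol_mul_apply, one_updateCol_mul_apply]
  by_cases hik : i = k <;> by_cases hjk : j = k <;> simp [hik, hjk] <;> ring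

theorem det_one_updateCol (k : ι) (h : ι → α) : ((1 : Matrix ι ι α).updateCol k h).det = h k := by
  rw [← cramer_apply, cramer_one]
  simp

end Matrix

open Matrix

def exchangeColumn {n : ℕ} (r : Fin n → ℤ) (B : Matrix (Fin n) (Fin n) ℤ) (k : Fin n) (E : ℝ) :
    Fin n → ℝ :=
  fun i => if i = k then -1 else r k * (max (-B i k) 0 : ℤ) + B i k * E

section Mutation

variable {n : ℕ} {r s : Fin n → ℤ} {B : Matrix (Fin n) (Fin n) ℤ}

theorem diagonal_mul_diagonal_mul_skew_apply
    (hskew : (diagonal s * diagonal r * B)ᵀ = -(diagonal s * diagonal r * B)) (i j : Fin n) :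
    s j * r j * B j i = -(s i * r i * B i j) := by
  simpa [diagonal_mul] using congr_fun (congr_fun hskew i) j

theorem diag_eq_zero_of_skew (hskew : ∀ i j, s j * r j * B j i = -(s i * r i * B i j))
    (hr : ∀ i, 0 < r i) (hs : ∀ i, 0 < s i) (k : Fin n) : B k k = 0 := by
  have := hskew k k
  have := mul_pos (hs k) (hr k)
  nlinarith

theorem mul_max_neg_eq_of_skew (hskew : ∀ i j, s j * r j * B j i = -(s i * r i * B i j))
    (hr : ∀ i, 0 < r i) (hs : ∀ i, 0 < s i) (j k : Fin n) :
    s j * r j * max (-B j k) 0 = s k * r k * max (B k j) 0 := by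
  rw [mul_max_of_nonneg _ _ (mul_pos (hs j) (hr j)).le,
    mul_max_of_nonneg _ _ (mul_pos (hs k) (hr k)).le, mul_neg, hskew, neg_neg, mul_zero, mul_zero]

theorem one_updateCol_exchangeColumn_mul_genMut_mul_transpose
    (hskew : ∀ i j, s j * r j * B j i = -(s i * r i * B i j))
    (hr : ∀ i, 0 < r i) (hs : ∀ i, 0 < s i) (k : Fin n) (E : ℝ) :
    (1 : Matrix (Fin n) (Fin n) ℝ).updateCol k (exchangeColumn r B k E) *
        ((genMut r k B).map (Int.cast : ℤ → ℝ) * (diagonal fun i => ((r i : ℝ))⁻¹) *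
          (diagonal fun i => ((s i : ℝ))⁻¹)) *
        ((1 : Matrix (Fin n) (Fin n) ℝ).updateCol k (exchangeColumn r B k E))ᵀ =
      B.map (Int.cast : ℤ → ℝ) * (diagonal fun i => ((r i : ℝ))⁻¹) *
        (diagonal fun i => ((s i : ℝ))⁻¹) := by
  have hBkk := diag_eq_zero_of_skew hskew hr hs k
  have hr0 : ∀ i, (r i : ℝ) ≠ 0 := fun i => by exact_mod_cast (hr i).ne'
  have hs0 : ∀ i, (s i : ℝ) ≠ 0 := fun i => by exact_mod_cast (hs i).ne'
  ext i j
  simp only [one_updateCol_mul_mul_transpose_apply, mul_diagonal, map_apply, genMut, of_apply]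
  by_cases hik : i = k <;> by_cases hjk : j = k
  · subst hik hjk; simp [hBkk]
  · subst hik; simp [hBkk, exchangeColumn, hjk]
  · subst hjk; simp [hBkk, exchangeColumn, hik]
  · have hlin : (B j k : ℝ) * ((r k : ℝ)⁻¹ * (s k : ℝ)⁻¹) =
        -(B k j * ((r j : ℝ)⁻¹ * (s j : ℝ)⁻¹)) := by
      have := congrArg (Int.cast : ℤ → ℝ) (hskew k j)
      push_cast at this
      field_simp [hr0 k, hs0 k, hr0 j, hs0 j]
      linear_combination this
    have hmax : max (-(B j k : ℝ)) 0 * ((r k : ℝ)⁻¹ * (s k : ℝ)⁻¹) =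
        max (B k j : ℝ) 0 * ((r j : ℝ)⁻¹ * (s j : ℝ)⁻¹) := by
      have := congrArg (Int.cast : ℤ → ℝ) (mul_max_neg_eq_of_skew hskew hr hs j k)
      push_cast at this
      field_simp [hr0 k, hs0 k, hr0 j, hs0 j]
      linear_combination this
    have hsplit_ik := max_zero_sub_max_neg_zero_eq_self (B i k : ℝ)
    have hsplit_kj := max_zero_sub_max_neg_zero_eq_self (B k j : ℝ)
    simp only [exchangeColumn, hik, hjk, hBkk, if_true, if_false, or_false, or_true]
    push_cast
    linear_combination (-(r k : ℝ) * B i k) * hmax - (E * B i k) * hlin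
      + ((r k : ℝ) * B k j * (r j : ℝ)⁻¹ * (s j : ℝ)⁻¹) * hsplit_ik
      - ((r k : ℝ) * B i k * (r j : ℝ)⁻¹ * (s j : ℝ)⁻¹) * hsplit_kj

end Mutation

section LogDerivAlongCoordinate

open Function

variable {𝕜 ι : Type*} [NontriviallyNormedField 𝕜] [DecidableEq ι]

theorem fderiv_apply_single_eq_deriv_update [Fintype ι] {F : Type*} [NormedAddCommGroup F]
    [NormedSpace 𝕜 F] {f : (ι → 𝕜) → F} {x : ι → 𝕜} (hf : DifferentiableAt 𝕜 f x) (i : ι) :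
    fderiv 𝕜 f x (Pi.single i 1) = deriv (fun t => f (update x i t)) (x i) := by
  have hf' : HasFDerivAt f (fderiv 𝕜 f x) (update x i (x i)) := by
    rw [update_eq_self]; exact hf.hasFDerivAt
  exact (hf'.comp_hasDerivAt (x i) (hasDerivAt_update x i (x i))).deriv.symm

theorem differentiableAt_update_apply (x : ι → 𝕜) (i j : ι) (t : 𝕜) :
    DifferentiableAt 𝕜 (fun t => update x i t j) t := by
  by_cases hji : j = i
  · subst hji; simp
  · simp [hji]

theorem logDeriv_update_apply (x : ι → 𝕜) (i j : ι) :
    logDeriv (fun t => update x i t j) (x i) = if j = i then (x i)⁻¹ else 0 := by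
  by_cases hji : j = i
  · subst hji; simp
  · simp [hji]

theorem logDeriv_inv_update_apply (x : ι → 𝕜) (i j : ι) :
    logDeriv (fun t => (update x i t j)⁻¹) (x i) = -(if j = i then (x i)⁻¹ else 0) := by
  have hinv : (fun t => (update x i t j)⁻¹) = fun t => update x i t j ^ (-1 : ℤ) := by
    funext t; exact (_root_.zpow_neg_one _).symm
  rw [hinv, logDeriv_fun_zpow (differentiableAt_update_apply x i j _), logDeriv_update_apply]
  push_cast
  ring

variable [Fintype ι] {x : ι → 𝕜}

theorem differentiableAt_prod_update_zpow (hx : ∀ j, x j ≠ 0) (i : ι) (b : ι → ℤ) :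
    DifferentiableAt 𝕜 (fun t => ∏ j, update x i t j ^ b j) (x i) :=
  .fun_finsetProd fun j _ => (differentiableAt_update_apply x i j _).zpow (by simpa using .inl (hx j))

theorem logDeriv_prod_update_zpow (hx : ∀ j, x j ≠ 0) (i : ι) (b : ι → ℤ) :
    logDeriv (fun t => ∏ j, update x i t j ^ b j) (x i) = b i / x i := by
  rw [logDeriv_prod (fun j _ => by simpa using zpow_ne_zero (b j) (hx j))
    (fun j _ => (differentiableAt_update_apply x i j _).zpow (by simpa using Or.inl (hx j)))]
  simp [logDeriv_fun_zpow (differentiableAt_update_apply x i _ _), logDeriv_update_apply,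
    div_eq_mul_inv]

theorem logDeriv_prod_update_pow (hx : ∀ j, x j ≠ 0) (i : ι) (a : ι → ℕ) :
    logDeriv (fun t => ∏ j, update x i t j ^ a j) (x i) = a i / x i := by
  simpa only [zpow_natCast, Int.cast_natCast] using
    logDeriv_prod_update_zpow hx i (fun j => (a j : ℤ))

theorem logDeriv_comp_mul_prod_update_zpow (hx : ∀ j, x j ≠ 0) (i : ι) (b : ι → ℤ) {y : 𝕜}
    (hy : y ≠ 0) {φ : 𝕜 → 𝕜} (hφ : DifferentiableAt 𝕜 φ (y * ∏ j, x j ^ b j)) :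
    logDeriv (fun t => φ (y * ∏ j, update x i t j ^ b j)) (x i) =
      (y * ∏ j, x j ^ b j) * logDeriv φ (y * ∏ j, x j ^ b j) * (b i / x i) := by
  set yhat := fun t => y * ∏ j, update x i t j ^ b j with hyhat_def
  have hyhat : yhat (x i) = y * ∏ j, x j ^ b j := by simp [yhat]
  have hY0 : yhat (x i) ≠ 0 := hyhat ▸ mul_ne_zero hy
    (Finset.prod_ne_zero_iff.2 fun j _ => zpow_ne_zero (b j) (hx j))
  have hφ' : DifferentiableAt 𝕜 φ (yhat (x i)) := hyhat ▸ hφ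
  rw [← Function.comp_def, logDeriv_comp hφ' ((differentiableAt_prod_update_zpow hx i b).const_mul y),
    ← mul_div_cancel₀ (deriv yhat (x i)) hY0, ← logDeriv_apply, hyhat_def,
    logDeriv_const_mul _ _ hy, logDeriv_prod_update_zpow hx, ← hyhat]
  ring

theorem mul_logDeriv_exchange_update (hx : ∀ j, x j ≠ 0) (i k : ι) (a : ι → ℕ) (ρ : ℕ)
    (b : ι → ℤ) {y c : 𝕜} (hy : y ≠ 0) (hc : c ≠ 0) {φ : 𝕜 → 𝕜}
    (hφ : DifferentiableAt 𝕜 φ (y * ∏ j, x j ^ b j)) (hφ0 : φ (y * ∏ j, x j ^ b j) ≠ 0) :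
    x i * logDeriv (fun t => (update x i t k)⁻¹ * (∏ j, update x i t j ^ a j) ^ ρ *
        φ (y * ∏ j, update x i t j ^ b j) / c) (x i) =
      -(if k = i then 1 else 0) + ρ * a i +
        (y * ∏ j, x j ^ b j) * logDeriv φ (y * ∏ j, x j ^ b j) * b i := by
  have hA0 : (update x i (x i) k)⁻¹ ≠ 0 := by simpa using hx k
  have hP0 : (∏ j, update x i (x i) j ^ a j) ^ ρ ≠ 0 := by
    simpa using pow_ne_zero ρ (Finset.prod_ne_zero_iff.2 fun j _ => pow_ne_zero (a j) (hx j))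
  have hdA : DifferentiableAt 𝕜 (fun t => (update x i t k)⁻¹) (x i) :=
    (differentiableAt_update_apply x i k _).inv (by simpa using hx k)
  have hdM : DifferentiableAt 𝕜 (fun t => ∏ j, update x i t j ^ a j) (x i) :=
    .fun_finsetProd fun j _ => (differentiableAt_update_apply x i j _).pow (a j)
  have hdΦ : DifferentiableAt 𝕜 (fun t => φ (y * ∏ j, update x i t j ^ b j)) (x i) :=
    (by simpa using hφ : DifferentiableAt 𝕜 φ _).comp (x i)
      ((differentiableAt_prod_update_zpow hx i b).const_mul y)
  rw [funext fun t => div_eq_mul_inv _ c, logDeriv_mul_const _ _ (inv_ne_zero hc),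
    logDeriv_mul (f := fun t => (update x i t k)⁻¹ * (∏ j, update x i t j ^ a j) ^ ρ)
      _ (mul_ne_zero hA0 hP0) (by simpa using hφ0) (hdA.fun_mul (hdM.pow ρ)) hdΦ,
    logDeriv_mul (f := fun t => (update x i t k)⁻¹)
      (g := fun t => (∏ j, update x i t j ^ a j) ^ ρ) _ hA0 hP0 hdA (hdM.pow ρ),
    logDeriv_inv_update_apply, logDeriv_fun_pow hdM, logDeriv_prod_update_pow hx,
    logDeriv_comp_mul_prod_update_zpow hx i b hy hφ]
  have hxi := hx i
  split_ifs
  · field_simp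
  · simp [field]

end LogDerivAlongCoordinate

open Function in
theorem Hmat_apply_eq_mul_logDeriv {n : ℕ} {X' : Fin n → (Fin n → ℝ) → ℝ} {p : Fin n → ℝ}
    {l : Fin n} (hd : DifferentiableAt ℝ (X' l) p) (i : Fin n) :
    Hmat X' p i l = p i * logDeriv (fun t => X' l (update p i t)) (p i) := by
  rw [Hmat, of_apply, fderiv_apply_single_eq_deriv_update hd, logDeriv_apply, update_eq_self]
  ring

theorem Hmat_eq_one_updateCol_exchangeColumn {n : ℕ} {r : Fin n → ℤ}
    {B : Matrix (Fin n) (Fin n) ℤ} {k : Fin n} (hr : 0 ≤ r k) (hBkk : B k k = 0)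
    {X' : Fin n → (Fin n → ℝ) → ℝ} {p : Fin n → ℝ} (hp : ∀ i, p i ≠ 0)
    (hXi : ∀ i, i ≠ k → X' i = fun q => q i) {y c : ℝ} {z : ℕ → ℝ} (hy : y ≠ 0) (hc : c ≠ 0)
    (hXk : X' k = fun q => (q k)⁻¹ * (∏ j, q j ^ (max (-(B j k)) 0).toNat) ^ (r k).toNat *
      (∑ m ∈ Finset.range ((r k).toNat + 1), z m * (y * ∏ j, q j ^ (B j k)) ^ m) / c)
    (hXkp : X' k p ≠ 0) :
    Hmat X' p = (1 : Matrix (Fin n) (Fin n) ℝ).updateCol k (exchangeColumn r B k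
      ((y * ∏ j, p j ^ B j k) * logDeriv (fun w => ∑ m ∈ Finset.range ((r k).toNat + 1),
        z m * w ^ m) (y * ∏ j, p j ^ B j k))) := by
  ext i l
  rw [updateCol_apply]
  split_ifs with hlk
  · subst hlk
    have hφ0 : ∑ m ∈ Finset.range ((r l).toNat + 1), z m * (y * ∏ j, p j ^ B j l) ^ m ≠ 0 := by
      intro h0; apply hXkp; rw [hXk]; simp [h0]
    rw [Hmat_apply_eq_mul_logDeriv (by rw [hXk]; fun_prop (disch := simp [hp])), hXk]
    beta_reduce
    rw [mul_logDeriv_exchange_update (φ := fun w => ∑ m ∈ Finset.range ((r l).toNat + 1),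
      z m * w ^ m) hp i l _ _ _ hy hc (by fun_prop) hφ0]
    have hcast : ∀ m : ℤ, 0 ≤ m → ((m.toNat : ℕ) : ℝ) = m := fun m hm => by
      exact_mod_cast Int.toNat_of_nonneg hm
    by_cases hil : i = l
    · subst hil; simp [exchangeColumn, hBkk]
    · simp only [exchangeColumn, hil, Ne.symm hil, if_false, hcast _ hr,
        hcast _ (le_max_right _ _)]
      ring
  · rw [Hmat_apply_eq_mul_logDeriv (by rw [hXi l hlk]; fun_prop), hXi l hlk]
    simp [logDeriv_update_apply, Matrix.one_apply, eq_comm, hp i]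

/-- The cluster of `Σ_u` is taken as the coordinate functions;
the `(R,Z)`-exchange relation produces `x_{k;v}` with positive constants
`y_k`, `z_{k,m}` (with `z_{k,0} = z_{k,r_k} = 1`) and a positive constant `c`
coming from the auxiliary addition `⊕` in the coefficient semifield. -/
theorem H_single_mutation_general (n : ℕ) (r s : Fin n → ℤ)
    (hr : ∀ i, 0 < r i) (hs : ∀ i, 0 < s i)
    (B B' : Matrix (Fin n) (Fin n) ℤ) (k : Fin n)
    (hskewB : (Matrix.diagonal s * Matrix.diagonal r * B)ᵀ =
      -(Matrix.diagonal s * Matrix.diagonal r * B))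
    (X X' : Fin n → (Fin n → ℝ) → ℝ)
    (hX : ∀ i, X i = fun q => q i)
    (hB' : B' = genMut r k B)
    (hXi : ∀ i, i ≠ k → X' i = X i)
    (hXk : ∃ (y c : ℝ) (z : ℕ → ℝ), 0 < y ∧ 0 < c ∧ (∀ m, 0 < z m) ∧
      z 0 = 1 ∧ z (r k).toNat = 1 ∧
      X' k = fun q =>
        (X k q)⁻¹ * (∏ j, X j q ^ (max (-(B j k)) 0).toNat) ^ (r k).toNat *
          (∑ m ∈ Finset.range ((r k).toNat + 1),
            z m * (y * ∏ j, X j q ^ (B j k)) ^ m) / c)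
    (p : Fin n → ℝ) (hp : ∀ i, p i ≠ 0) (hX'p : ∀ i, X' i p ≠ 0) :
    Hmat X' p *
        (B'.map (Int.cast : ℤ → ℝ) * (Matrix.diagonal fun i => ((r i : ℝ))⁻¹) *
          (Matrix.diagonal fun i => ((s i : ℝ))⁻¹)) *
        (Hmat X' p)ᵀ =
      B.map (Int.cast : ℤ → ℝ) * (Matrix.diagonal fun i => ((r i : ℝ))⁻¹) *
        (Matrix.diagonal fun i => ((s i : ℝ))⁻¹) ∧
    (Hmat X' p).det = -1 := by
  obtain ⟨y, c, z, hy, hc, -, -, -, hXk⟩ := hXk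
  simp only [hX] at hXk hXi
  have hskew := diagonal_mul_diagonal_mul_skew_apply hskewB
  rw [Hmat_eq_one_updateCol_exchangeColumn (hr k).le (diag_eq_zero_of_skew hskew hr hs k) hp hXi
    hy.ne' hc.ne' hXk (hX'p k), hB']
  exact ⟨one_updateCol_exchangeColumn_mul_genMut_mul_transpose hskew hr hs k _,
    (det_one_updateCol _ _).trans (if_pos rfl)⟩

/-- if `Σ_v = μ_k(Σ_u)` in an `(R,Z)`-cluster pattern with
`R`-skew-balance `S`, then `H·(B_v R⁻¹ S⁻¹)·Hᵀ = B_u R⁻¹ S⁻¹` and `det H = -1`,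
where `H = H_u^v(X)`.  The cluster of `Σ_u` is taken as the coordinate functions;
the `(R,Z)`-exchange relation produces `x_{k;v}` with positive constants
`y_k`, `z_{k,m}` (with `z_{k,0} = z_{k,r_k} = 1`) and a positive constant `c`
coming from the auxiliary addition `⊕` in the coefficient semifield. -/
theorem H_single_mutation (n : ℕ) (r s : Fin n → ℤ)
    (hr : ∀ i, 0 < r i) (hs : ∀ i, 0 < s i)
    (B B' : Matrix (Fin n) (Fin n) ℤ) (k : Fin n)
    (hskewB : (Matrix.diagonal s * Matrix.diagonal r * B)ᵀ =
      -(Matrix.diagonal s * Matrix.diagonal r * B))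
    (X X' : Fin n → (Fin n → ℝ) → ℝ)
    (hX : ∀ i, X i = fun q => q i)
    (hB' : B' = genMut r k B)
    (hXi : ∀ i, i ≠ k → X' i = X i)
    (hXk : ∃ (y c : ℝ) (z : ℕ → ℝ), 0 < y ∧ 0 < c ∧ (∀ m, 0 < z m) ∧
      z 0 = 1 ∧ z (r k).toNat = 1 ∧
      X' k = fun q =>
        (X k q)⁻¹ * (∏ j, X j q ^ (max (-(B j k)) 0).toNat) ^ (r k).toNat *
          (∑ m ∈ Finset.range ((r k).toNat + 1),
            z m * (y * ∏ j, X j q ^ (B j k)) ^ m) / c)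
    (p : Fin n → ℝ) (hp : ∀ i, p i ≠ 0) (hX'p : ∀ i, X' i p ≠ 0)
    (hd : ∀ i, DifferentiableAt ℝ (X' i) p) :
    Hmat X' p *
        (B'.map (Int.cast : ℤ → ℝ) * (Matrix.diagonal fun i => ((r i : ℝ))⁻¹) *
          (Matrix.diagonal fun i => ((s i : ℝ))⁻¹)) *
        (Hmat X' p)ᵀ =
      B.map (Int.cast : ℤ → ℝ) * (Matrix.diagonal fun i => ((r i : ℝ))⁻¹) *
        (Matrix.diagonal fun i => ((s i : ℝ))⁻¹) ∧
    (Hmat X' p).det = -1 :=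
  H_single_mutation_general n r s hr hs B B' k hskewB X X' hX hB' hXi hXk p hp hX'p
end

section
/- In an (R,Z)-cluster pattern, if two seeds Σ_t and Σ_{t_0} have equal clusters X_t = X_{t_0} (as ordered tuples, x_{i;t} = x_{i;t_0} for all i), then their exchange matrices coincide: B_t = B_{t_0}. -/
open Matrix

/-- One step of `(R,Z)`-mutation in direction `k` between the seeds `(X, B)` and
`(X', B')`, the clusters being written as functions of the initial cluster. -/
def IsGCAMutation {n : ℕ} (r : Fin n → ℤ)
    (X X' : Fin n → (Fin n → ℝ) → ℝ) (B B' : Matrix (Fin n) (Fin n) ℤ) : Prop :=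
  ∃ k : Fin n, B' = genMut r k B ∧ (∀ i, i ≠ k → X' i = X i) ∧
    ∃ (y c : ℝ) (z : ℕ → ℝ), 0 < y ∧ 0 < c ∧ (∀ m, 0 < z m) ∧
      z 0 = 1 ∧ z (r k).toNat = 1 ∧
      X' k = fun q =>
        (X k q)⁻¹ * (∏ j, X j q ^ (max (-(B j k)) 0).toNat) ^ (r k).toNat *
          (∑ m ∈ Finset.range ((r k).toNat + 1),
            z m * (y * ∏ j, X j q ^ (B j k)) ^ m) / c

/-!
The invariant is the log-Jacobian `N_t` of the cluster `X_t` at the point `(1, …, 1)`. A mutation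
in direction `k` multiplies it on the left by an involution `M = 1 + e_k dᵀ`, whose row `d` is
built from the exchange matrix and one real number (the logarithmic slope of the exchange
polynomial at the base point); the same `M` satisfies `Ω(μ_k B) = Mᵀ Ω(B) M` for the skew form
`Ω(B) = B R⁻¹ S⁻¹`. Hence `Ω(B_{t_0}) = N_tᵀ Ω(B_t) N_t` along the path, and equal clusters force
`N_t = 1`, so `Ω(B_t) = Ω(B_{t_0})` and `B_t = B_{t_0}`.
-/

open Real Finset

namespace Matrix

variable {R : Type*} [CommRing R] {ι : Type*} [Fintype ι] [DecidableEq ι]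

def addRow (k : ι) (d : ι → R) : Matrix ι ι R := 1 + vecMulVec (Pi.single k 1) d

lemma addRow_mul_addRow {k : ι} {d : ι → R} (hd : d k = -2) :
    addRow k d * addRow k d = 1 := by
  simp only [addRow, Matrix.add_mul, Matrix.mul_add, Matrix.one_mul,
    vecMulVec_mul_vecMulVec, dotProduct_single, mul_one, hd, vecMulVec_smul]
  module

lemma addRow_mulVec (k : ι) (d h : ι → R) :
    addRow k d *ᵥ h = h + (d ⬝ᵥ h) • Pi.single k 1 := by
  simp [addRow, add_mulVec, vecMulVec_mulVec]

lemma transpose_addRow_mul_mul_addRow_apply (k : ι) (d : ι → R) (Ω : Matrix ι ι R) (i j : ι) :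
    ((addRow k d)ᵀ * Ω * addRow k d) i j =
      Ω i j + d i * Ω k j + Ω i k * d j + d i * Ω k k * d j := by
  simp only [addRow, transpose_add, transpose_one, transpose_vecMulVec, Matrix.add_mul, one_mul,
    vecMulVec_mul, single_vecMul, one_smul, Matrix.mul_add, mul_one, mul_vecMulVec, mulVec_single,
    MulOpposite.op_one, Matrix.add_apply, vecMulVec_apply, row_apply, col_apply]
  ring

end Matrix

variable {n : ℕ}

/-- `skewForm (s * r) B` is the paper's `B R⁻¹ S⁻¹`. -/
noncomputable def skewForm (w : Fin n → ℤ) (B : Matrix (Fin n) (Fin n) ℤ) :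
    Matrix (Fin n) (Fin n) ℝ :=
  of fun i j => B i j / w j

/-- The log-Jacobian of a mutation in direction `k`; `u` stands for the logarithmic derivative of
the exchange polynomial at the base point. -/
noncomputable def mutationLogJacobian (r : Fin n → ℤ) (k : Fin n) (B : Matrix (Fin n) (Fin n) ℤ)
    (u : ℝ) : Matrix (Fin n) (Fin n) ℝ :=
  addRow k ((fun j => r k * ((max (-B j k) 0 : ℤ) : ℝ) + u * B j k) - Pi.single k 2)

lemma diag_eq_zero_of_skew_s13 {w : Fin n → ℤ} (hw : ∀ i, w i ≠ 0) {B : Matrix (Fin n) (Fin n) ℤ}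
    (hB : ∀ i j, w j * B j i = -(w i * B i j)) (i : Fin n) : B i i = 0 := by
  have hii : w i * B i i = 0 := by linarith [hB i i]
  simpa [hw i] using hii

lemma skewForm_genMut {w : Fin n → ℤ} (hw : ∀ i, 0 < w i) {B : Matrix (Fin n) (Fin n) ℤ}
    (hB : ∀ i j, w j * B j i = -(w i * B i j)) (r : Fin n → ℤ) (k : Fin n) (u : ℝ) :
    skewForm w (genMut r k B) =
      (mutationLogJacobian r k B u)ᵀ * skewForm w B * mutationLogJacobian r k B u := by
  have hkk := diag_eq_zero_of_skew_s13 (fun i => (hw i).ne') hB k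
  ext i j
  rw [mutationLogJacobian, transpose_addRow_mul_mul_addRow_apply]
  simp only [skewForm, genMut, of_apply, Pi.sub_apply, Pi.single_apply]
  push_cast
  by_cases hi : i = k <;> by_cases hj : j = k
  · simp [hi, hj, hkk]
  · subst hi
    simp only [hj, or_false, ↓reduceIte, hkk, Int.cast_zero, neg_zero, max_self, mul_zero,
      add_zero, zero_sub, neg_mul, zero_div, sub_zero, zero_mul]
    ring
  · subst hj
    simp only [hi, or_true, ↓reduceIte, sub_zero, hkk, Int.cast_zero, zero_div, mul_zero,
      add_zero, neg_zero, max_self, zero_sub, mul_neg, zero_mul]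
    ring
  · have hwj : (0 : ℝ) < w j := by exact_mod_cast hw j
    have hwk : (0 : ℝ) < w k := by exact_mod_cast hw k
    have hjk : (B j k : ℝ) = -(w k * B k j) / w j := by
      rw [eq_div_iff hwj.ne']; exact_mod_cast by linarith [hB k j]
    have hmax : (max (-B j k) 0 : ℝ) = w k / w j * max (B k j : ℝ) 0 := by
      rw [mul_max_of_nonneg _ _ (by positivity), mul_zero, hjk]
      congr 1
      ring
    have hposPart : ∀ x : ℝ, max x 0 = x + max (-x) 0 := fun x => by
      linarith [max_zero_sub_max_neg_zero_eq_self x]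
    -- the `u`-terms cancel since `b_jk / w_k = -b_kj / w_j`
    simp only [hi, hj, or_self, ↓reduceIte, sub_zero, hkk, Int.cast_zero, zero_div, mul_zero]
    rw [hmax, hjk]
    field_simp
    rw [hposPart (B k j : ℝ), hposPart (B i k : ℝ)]
    ring

lemma exchange_sum_pos {y t : ℝ} (hy : 0 < y) (ht : 0 < t) {z : ℕ → ℝ} (hz : ∀ m, 0 < z m)
    (E : ℕ) : 0 < ∑ m ∈ range (E + 1), z m * (y * t) ^ m :=
  sum_pos (fun m _ => by have := hz m; positivity) nonempty_range_add_one

lemma log_exchange {x : Fin n → ℝ} (hx : ∀ j, 0 < x j) (k : Fin n) (p : Fin n → ℕ)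
    (b : Fin n → ℤ) (E : ℕ) {y c : ℝ} (hy : 0 < y) (hc : c ≠ 0) {z : ℕ → ℝ}
    (hz : ∀ m, 0 < z m) :
    log ((x k)⁻¹ * (∏ j, x j ^ p j) ^ E *
        (∑ m ∈ range (E + 1), z m * (y * ∏ j, x j ^ b j) ^ m) / c) =
      -log (x k) + E * ∑ j, p j * log (x j) +
        log (∑ m ∈ range (E + 1), z m * (y * exp (∑ j, b j * log (x j))) ^ m) - log c := by
  have hprod : ∏ j, x j ^ b j = exp (∑ j, b j * log (x j)) := by
    rw [exp_sum]
    exact prod_congr rfl fun j _ => by rw [← log_zpow, exp_log (zpow_pos (hx j) _)]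
  have hP : 0 < ∏ j, x j ^ p j := prod_pos fun j _ => pow_pos (hx j) _
  have hS := exchange_sum_pos hy (exp_pos (∑ j, b j * log (x j))) hz E
  have hk : 0 < (x k)⁻¹ := inv_pos.2 (hx k)
  have hPE := pow_pos hP E
  rw [hprod, log_div (mul_pos (mul_pos hk hPE) hS).ne' hc, log_mul (mul_pos hk hPE).ne' hS.ne',
    log_mul hk.ne' hPE.ne', log_inv, log_pow, log_prod (fun j _ => (pow_pos (hx j) _).ne')]
  simp only [log_pow]

lemma hasDerivAt_log_exchange {g : Fin n → ℝ → ℝ} {h : Fin n → ℝ} (hg : ∀ j v, 0 < g j v)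
    (hd : ∀ j, HasDerivAt (fun v => log (g j v)) (h j) 0) (k : Fin n) (p : Fin n → ℕ)
    (b : Fin n → ℤ) (E : ℕ) {y c : ℝ} (hy : 0 < y) (hc : c ≠ 0) {z : ℕ → ℝ}
    (hz : ∀ m, 0 < z m) {u : ℝ}
    (hu : HasDerivAt (fun s => log (∑ m ∈ range (E + 1), z m * (y * exp s) ^ m)) u
      (∑ j, b j * log (g j 0))) :
    HasDerivAt (fun v => log ((g k v)⁻¹ * (∏ j, g j v ^ p j) ^ E *
        (∑ m ∈ range (E + 1), z m * (y * ∏ j, g j v ^ b j) ^ m) / c))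
      (-h k + E * ∑ j, p j * h j + u * ∑ j, b j * h j) 0 := by
  have hS : HasDerivAt (fun v => ∑ j, (b j : ℝ) * log (g j v)) (∑ j, b j * h j) 0 :=
    HasDerivAt.fun_sum fun j _ => (hd j).const_mul _
  have hP : HasDerivAt (fun v => ∑ j, (p j : ℝ) * log (g j v)) (∑ j, p j * h j) 0 :=
    HasDerivAt.fun_sum fun j _ => (hd j).const_mul _
  refine ((((hd k).neg.add (hP.const_mul (E : ℝ))).add (hu.comp 0 hS)).sub_const
    (log c)).congr_of_eventuallyEq (Filter.Eventually.of_forall fun v => ?_) |>.congr_deriv ?_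
  · exact log_exchange (fun j => hg j v) k p b E hy hc hz
  · ring

/-- `N` is the Jacobian at `0` of `v ↦ log (X (exp v))`: the transpose of the paper's
`H_{t_0}^t(X)` at the point `(1, …, 1)`. -/
def HasLogJacobian (X : Fin n → (Fin n → ℝ) → ℝ) (N : Matrix (Fin n) (Fin n) ℝ) : Prop :=
  ∀ a i, HasDerivAt (fun v => log (X i fun w => exp (v * a w))) ((N *ᵥ a) i) 0

lemma hasLogJacobian_coord : HasLogJacobian (n := n) (fun i q => q i) 1 := by
  intro a i
  simpa using (hasDerivAt_id (0 : ℝ)).mul_const (a i)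

lemma HasLogJacobian.unique {X : Fin n → (Fin n → ℝ) → ℝ} {N N' : Matrix (Fin n) (Fin n) ℝ}
    (h : HasLogJacobian X N) (h' : HasLogJacobian X N') : N = N' := by
  ext i j
  simpa [mulVec_single_one] using (h (Pi.single j 1) i).unique (h' (Pi.single j 1) i)

lemma IsGCAMutation.pos {r : Fin n → ℤ} {X X' : Fin n → (Fin n → ℝ) → ℝ}
    {B B' : Matrix (Fin n) (Fin n) ℤ} (hm : IsGCAMutation r X X' B B') {q : Fin n → ℝ}
    (hX : ∀ i, 0 < X i q) (i : Fin n) : 0 < X' i q := by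
  obtain ⟨k, -, hne, y, c, z, hy, hc, hz, -, -, hXk⟩ := hm
  by_cases hik : i = k
  · subst hik
    rw [hXk]
    have hP : 0 < ∏ j, X j q ^ (max (-(B j i)) 0).toNat := prod_pos fun j _ => pow_pos (hX j) _
    have hS := exchange_sum_pos hy (prod_pos (s := univ) fun j _ => zpow_pos (hX j) (B j i)) hz
      (r i).toNat
    have hXi := hX i
    positivity
  · rw [hne i hik]
    exact hX i

lemma IsGCAMutation.hasLogJacobian {r : Fin n → ℤ} (hr : ∀ i, 0 ≤ r i)
    {X X' : Fin n → (Fin n → ℝ) → ℝ} {B B' : Matrix (Fin n) (Fin n) ℤ}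
    (hm : IsGCAMutation r X X' B B') (hX : ∀ q, (∀ w, 0 < q w) → ∀ i, 0 < X i q)
    {N : Matrix (Fin n) (Fin n) ℝ} (hN : HasLogJacobian X N) :
    ∃ k u, B' = genMut r k B ∧ HasLogJacobian X' (mutationLogJacobian r k B u * N) := by
  obtain ⟨k, hB', hne, y, c, z, hy, hc, hz, -, -, hXk⟩ := hm
  set φ := fun s => log (∑ m ∈ range ((r k).toNat + 1), z m * (y * exp s) ^ m)
  set s₀ := ∑ j, (B j k : ℝ) * log (X j fun _ => 1)
  have hφ : DifferentiableAt ℝ φ s₀ :=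
    (by fun_prop : DifferentiableAt ℝ (fun s => ∑ m ∈ range ((r k).toNat + 1),
      z m * (y * exp s) ^ m) s₀).log (exchange_sum_pos hy (exp_pos _) hz _).ne'
  refine ⟨k, deriv φ s₀, hB', fun a i => ?_⟩
  have hγ : ∀ j v, 0 < X j fun w => exp (v * a w) := fun j v => hX _ (fun w => exp_pos _) j
  rw [← mulVec_mulVec, mutationLogJacobian, addRow_mulVec]
  by_cases hik : i = k
  · subst hik
    rw [hXk]
    refine (hasDerivAt_log_exchange hγ (hN a) i (fun j => (max (-B j i) 0).toNat)
      (fun j => B j i) (r i).toNat hy hc.ne' hz (u := deriv φ s₀)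
      (by simp only [zero_mul, exp_zero]; exact hφ.hasDerivAt)).congr_deriv ?_
    have hE : (((r i).toNat : ℕ) : ℝ) = r i := by exact_mod_cast Int.toNat_of_nonneg (hr i)
    have hp : ∀ j, (((max (-B j i) 0).toNat : ℕ) : ℝ) = ((max (-B j i) 0 : ℤ) : ℝ) :=
      fun j => by exact_mod_cast Int.toNat_of_nonneg (le_max_right _ _)
    simp only [hE, hp, Int.cast_max, Int.cast_neg, Int.cast_zero, mul_sum, dotProduct,
      Pi.sub_apply, Pi.single_apply, sub_mul, add_mul, mul_assoc, ite_mul, zero_mul, sum_sub_distrib,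
      sum_add_distrib, sum_ite_eq', mem_univ, ↓reduceIte, Pi.add_apply, Pi.smul_apply,
      smul_eq_mul, mul_one]
    ring
  · simpa [hne i hik, hik] using hN a i

lemma mutationLogJacobian_mul_self {r : Fin n → ℤ} {k : Fin n} {B : Matrix (Fin n) (Fin n) ℤ}
    (hkk : B k k = 0) (u : ℝ) : mutationLogJacobian r k B u * mutationLogJacobian r k B u = 1 :=
  addRow_mul_addRow (by simp [hkk])

lemma skewForm_injective {w : Fin n → ℤ} (hw : ∀ i, w i ≠ 0) :
    Function.Injective (skewForm w) := by
  intro B B' h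
  ext i j
  have hwj : (w j : ℝ) ≠ 0 := by exact_mod_cast hw j
  exact_mod_cast (div_left_inj' hwj).1 (congrFun (congrFun h i) j)

lemma IsGCAMutation.exists_hasLogJacobian_skewForm {r w : Fin n → ℤ} (hr : ∀ i, 0 ≤ r i)
    (hw : ∀ i, 0 < w i) {X X' : Fin n → (Fin n → ℝ) → ℝ} {B B' : Matrix (Fin n) (Fin n) ℤ}
    (hm : IsGCAMutation r X X' B B') (hB : ∀ i j, w j * B j i = -(w i * B i j))
    (hX : ∀ q, (∀ w, 0 < q w) → ∀ i, 0 < X i q) {N : Matrix (Fin n) (Fin n) ℝ}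
    (hN : HasLogJacobian X N) :
    ∃ M, HasLogJacobian X' (M * N) ∧ skewForm w B = Mᵀ * skewForm w B' * M := by
  obtain ⟨k, u, rfl, hJ⟩ := hm.hasLogJacobian hr hX hN
  have hMM := mutationLogJacobian_mul_self (r := r)
    (diag_eq_zero_of_skew_s13 (fun i => (hw i).ne') hB k) u
  refine ⟨_, hJ, ?_⟩
  rw [skewForm_genMut hw hB r k u]
  simp only [← Matrix.mul_assoc, ← transpose_mul, hMM, transpose_one, Matrix.one_mul]
  rw [Matrix.mul_assoc, hMM, Matrix.mul_one]

/-- in an `(R,Z)`-cluster pattern, if the clusters of two seeds are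
equal as ordered tuples (`x_{i;t} = x_{i;t_0}` for all `i`), then the exchange
matrices coincide: `B_t = B_{t_0}`. -/
theorem equal_clusters_equal_exchange_matrices (n m : ℕ) (r s : Fin n → ℤ)
    (hr : ∀ i, 0 < r i) (hs : ∀ i, 0 < s i)
    (X : Fin (m + 1) → Fin n → (Fin n → ℝ) → ℝ)
    (B : Fin (m + 1) → Matrix (Fin n) (Fin n) ℤ)
    (hskew : ∀ t, (Matrix.diagonal s * Matrix.diagonal r * B t)ᵀ =
      -(Matrix.diagonal s * Matrix.diagonal r * B t))
    (hX0 : ∀ i, X 0 i = fun q => q i)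
    (hmut : ∀ j : Fin m,
      IsGCAMutation r (X j.castSucc) (X j.succ) (B j.castSucc) (B j.succ))
    (heq : ∀ i, X (Fin.last m) i = X 0 i) :
    B (Fin.last m) = B 0 := by
  have hw : ∀ i, 0 < s i * r i := fun i => mul_pos (hs i) (hr i)
  have hB : ∀ t i j, s j * r j * B t j i = -(s i * r i * B t i j) := fun t i j => by
    simpa [diagonal_mul, mul_assoc] using congrFun (congrFun (hskew t) i) j
  have hX0' : X 0 = fun i q => q i := funext hX0
  have hpos : ∀ t q, (∀ w, 0 < q w) → ∀ i, 0 < X t i q := by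
    intro t q hq
    induction t using Fin.induction with
    | zero => simpa [hX0'] using hq
    | succ j ih => exact (hmut j).pos ih
  have hchain : ∀ t, ∃ N, HasLogJacobian (X t) N ∧
      skewForm (fun i => s i * r i) (B 0) = Nᵀ * skewForm (fun i => s i * r i) (B t) * N := by
    intro t
    induction t using Fin.induction with
    | zero => exact ⟨1, hX0' ▸ hasLogJacobian_coord, by simp⟩
    | succ j ih =>
      obtain ⟨N, hN, hΩ⟩ := ih
      obtain ⟨M, hMN, hΩM⟩ := (hmut j).exists_hasLogJacobian_skewForm (fun i => (hr i).le) hw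
        (hB _) (hpos _) hN
      exact ⟨M * N, hMN, by rw [hΩ, hΩM, transpose_mul]; simp only [Matrix.mul_assoc]⟩
  obtain ⟨N, hN, hΩ⟩ := hchain (Fin.last m)
  obtain rfl : N = 1 := hN.unique (by rw [funext heq, hX0']; exact hasLogJacobian_coord)
  simp only [transpose_one, Matrix.one_mul, Matrix.mul_one] at hΩ
  exact skewForm_injective (fun i => (hw i).ne') hΩ.symm
end

section
/- In an (R,Z)-cluster pattern, the exchange matrices at any two vertices have equal rank and equal determinant: rank(B_t) = rank(B_{t_0}) and det(B_t) = det(B_{t_0}) for all t, t_0 ∈ 𝕋_n. -/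
/-!
A generalized mutation `μ_k` of a matrix `B` with `B k k = 0` factors as `E * B * F`, where
`E = 1 + u e_kᵀ` and `F = 1 + e_k wᵀ` are rank-one perturbations of the identity whose `k`-th
diagonal entry is `-1`; by the matrix determinant lemma both have determinant `-1`. Hence `μ_k`
preserves rank and determinant. Skew-symmetrizability by a positive diagonal is preserved by
mutation and forces a zero diagonal, so the factorization applies at every step of the walk.
-/

open Matrix

theorem Matrix.det_one_add_vecMulVec {m R : Type*} [Fintype m] [DecidableEq m] [CommRing R]
    (u v : m → R) : (1 + vecMulVec u v).det = 1 + v ⬝ᵥ u := by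
  rw [vecMulVec_eq Unit, det_one_add_replicateCol_mul_replicateRow]

theorem mul_max_zero_eq_of_mul_eq_neg {a b c d : ℤ} (ha : 0 ≤ a) (hc : 0 ≤ c)
    (h : a * b = -(c * d)) : a * max b 0 = c * max (-d) 0 := by
  rw [mul_max_of_nonneg _ _ ha, mul_max_of_nonneg _ _ hc, mul_zero, mul_zero, h, mul_neg]

namespace GenMut

variable {n : ℕ} (r : Fin n → ℤ) (k : Fin n) (A : Matrix (Fin n) (Fin n) ℤ)

def colFactor : Matrix (Fin n) (Fin n) ℤ :=
  1 + vecMulVec (fun i => if i = k then -2 else r k * max (A i k) 0) (Pi.single k 1)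

def rowFactor : Matrix (Fin n) (Fin n) ℤ :=
  1 + vecMulVec (Pi.single k 1) (fun j => if j = k then -2 else r k * max (-A k j) 0)

theorem det_colFactor : (colFactor r k A).det = -1 := by
  rw [colFactor, det_one_add_vecMulVec, single_dotProduct]
  norm_num

theorem det_rowFactor : (rowFactor r k A).det = -1 := by
  rw [rowFactor, det_one_add_vecMulVec, dotProduct_single]
  norm_num

theorem genMut_eq_colFactor_mul_mul_rowFactor (hA : A k k = 0) :
    genMut r k A = colFactor r k A * A * rowFactor r k A := by
  rw [colFactor, rowFactor, Matrix.add_mul, Matrix.one_mul, vecMulVec_mul, single_one_vecMul,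
    Matrix.mul_add, Matrix.mul_one, Matrix.add_mul, mul_vecMulVec, mulVec_single_one,
    vecMulVec_mul_vecMulVec]
  ext i j
  by_cases hi : i = k <;> by_cases hj : j = k <;>
    simp [genMut, vecMulVec_apply, dotProduct_single, hi, hj, hA] <;> ring

theorem det_genMut (hA : A k k = 0) : (genMut r k A).det = A.det := by
  rw [genMut_eq_colFactor_mul_mul_rowFactor r k A hA, det_mul, det_mul, det_colFactor,
    det_rowFactor]
  ring

theorem rank_genMut (hA : A k k = 0) : (genMut r k A).rank = A.rank := by
  have hunit : IsUnit (-1 : ℤ) := isUnit_one.neg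
  rw [genMut_eq_colFactor_mul_mul_rowFactor r k A hA,
    rank_mul_eq_left_of_isUnit_det _ _ (by rwa [det_rowFactor]),
    rank_mul_eq_right_of_isUnit_det _ _ (by rwa [det_colFactor])]

end GenMut

def SkewSymmetrizedBy {n : ℕ} (t : Fin n → ℤ) (A : Matrix (Fin n) (Fin n) ℤ) : Prop :=
  ∀ i j, t i * A i j = -(t j * A j i)

namespace SkewSymmetrizedBy

variable {n : ℕ} {t : Fin n → ℤ} {A : Matrix (Fin n) (Fin n) ℤ}

theorem of_transpose_eq_neg (h : (diagonal t * A)ᵀ = -(diagonal t * A)) :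
    SkewSymmetrizedBy t A := by
  intro i j
  simpa [diagonal_mul, eq_neg_iff_add_eq_zero, add_comm] using congrFun (congrFun h j) i

theorem apply_self_eq_zero (h : SkewSymmetrizedBy t A) {k : Fin n} (hk : t k ≠ 0) :
    A k k = 0 := by
  have : t k * A k k = 0 := by linarith [h k k]
  exact (mul_eq_zero.mp this).resolve_left hk

theorem genMut (h : SkewSymmetrizedBy t A) (ht : ∀ i, 0 ≤ t i) (r : Fin n → ℤ) (k : Fin n) :
    SkewSymmetrizedBy t (genMut r k A) := by
  intro i j
  by_cases hij : i = k ∨ j = k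
  · simp only [_root_.genMut, of_apply, hij, hij.symm, if_true]
    linarith [h i j]
  · obtain ⟨hi, hj⟩ := not_or.mp hij
    simp only [_root_.genMut, of_apply, hi, hj, or_self, if_false]
    have hik := mul_max_zero_eq_of_mul_eq_neg (ht i) (ht k) (h i k)
    have hjk := mul_max_zero_eq_of_mul_eq_neg (ht j) (ht k) (h j k)
    linear_combination h i j + r k * max (-A k j) 0 * h i k + r k * A k j * hik
      + r k * max (-A k i) 0 * h j k + r k * A k i * hjk

theorem of_reflTransGen (h : SkewSymmetrizedBy t A) (ht : ∀ i, 0 ≤ t i) {r : Fin n → ℤ}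
    {B : Matrix (Fin n) (Fin n) ℤ}
    (hwalk : Relation.ReflTransGen (fun A A' => ∃ k : Fin n, A' = _root_.genMut r k A) A B) :
    SkewSymmetrizedBy t B := by
  induction hwalk with
  | refl => exact h
  | tail _ hstep ih =>
    obtain ⟨k, rfl⟩ := hstep
    exact ih.genMut ht r k

end SkewSymmetrizedBy

theorem exchange_matrices_rank_det_general (n : ℕ) (r : Fin n → ℤ)
    (t : Fin n → ℤ) (ht : ∀ i, 0 < t i)
    (B₀ B : Matrix (Fin n) (Fin n) ℤ)
    (hskew : ((Matrix.diagonal t) * B₀)ᵀ = -((Matrix.diagonal t) * B₀))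
    (hwalk : Relation.ReflTransGen
      (fun A A' : Matrix (Fin n) (Fin n) ℤ => ∃ k : Fin n, A' = genMut r k A) B₀ B) :
    B.rank = B₀.rank ∧ B.det = B₀.det := by
  have hskew₀ := SkewSymmetrizedBy.of_transpose_eq_neg hskew
  have ht₀ : ∀ i, 0 ≤ t i := fun i => (ht i).le
  induction hwalk with
  | refl => exact ⟨rfl, rfl⟩
  | @tail A _ hB₀A hstep ih =>
    obtain ⟨k, rfl⟩ := hstep
    have hA : A k k = 0 := (hskew₀.of_reflTransGen ht₀ hB₀A).apply_self_eq_zero (ht k).ne'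
    exact ⟨(GenMut.rank_genMut r k A hA).trans ih.1, (GenMut.det_genMut r k A hA).trans ih.2⟩

/-- in an `(R,Z)`-cluster pattern, the exchange matrices at any two
vertices of the `n`-regular tree — i.e. any two skew-symmetrizable matrices related
by a finite sequence of generalized matrix mutations — have equal rank and equal
determinant. -/
theorem exchange_matrices_rank_det (n : ℕ) (r : Fin n → ℤ) (hr : ∀ i, 0 < r i)
    (t : Fin n → ℤ) (ht : ∀ i, 0 < t i)
    (B₀ B : Matrix (Fin n) (Fin n) ℤ)
    (hskew : ((Matrix.diagonal t) * B₀)ᵀ = -((Matrix.diagonal t) * B₀))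
    (hwalk : Relation.ReflTransGen
      (fun A A' : Matrix (Fin n) (Fin n) ℤ => ∃ k : Fin n, A' = genMut r k A) B₀ B) :
    B.rank = B₀.rank ∧ B.det = B₀.det :=
  exchange_matrices_rank_det_general n r t ht B₀ B hskew hwalk
end

section
/- The d-vectors of an (R,Z)-cluster pattern with initial exchange matrix B_{t_0} coincide with the d-vectors of the standard cluster pattern with initial exchange matrix B_{t_0}·R: both families of D-matrices satisfy the same initial condition D_{t_0} = −I_n and the same mutation recursion, hence are equal at every vertex of the n-regular tree. -/
open Matrix

/-- The D-matrix recursion for the column `k`, with weights `w l = b_{lk} r_k`: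
`d'_{ik} = -d_{ik} + max(∑_{w l > 0} d_{il} w l, ∑_{w l < 0} -d_{il} w l)`. -/
def dStep {n : ℕ} (k : Fin n) (w : Fin n → ℤ) (D : Matrix (Fin n) (Fin n) ℤ) :
    Matrix (Fin n) (Fin n) ℤ :=
  Matrix.of fun i j =>
    if j ≠ k then D i j
    else -(D i k) + max (∑ l ∈ Finset.univ.filter (fun l => 0 < w l), D i l * w l)
      (∑ l ∈ Finset.univ.filter (fun l => w l < 0), -(D i l * w l))

/-- One step of the D-matrix pattern induced by the `(R,Z)`-cluster pattern. -/
def genStep {n : ℕ} (r : Fin n → ℤ) (k : Fin n)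
    (p : Matrix (Fin n) (Fin n) ℤ × Matrix (Fin n) (Fin n) ℤ) :
    Matrix (Fin n) (Fin n) ℤ × Matrix (Fin n) (Fin n) ℤ :=
  (dStep k (fun l => p.2 l k * r k) p.1, genMut r k p.2)

/-- One step of the D-matrix pattern induced by the standard cluster pattern. -/
def stdStep {n : ℕ} (k : Fin n)
    (p : Matrix (Fin n) (Fin n) ℤ × Matrix (Fin n) (Fin n) ℤ) :
    Matrix (Fin n) (Fin n) ℤ × Matrix (Fin n) (Fin n) ℤ :=
  (dStep k (fun l => p.2 l k) p.1, stdMut k p.2)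

lemma genMut_mul_diagonal {n : ℕ} (r : Fin n → ℤ) (hr : ∀ i, 0 < r i) (k : Fin n)
    (B : Matrix (Fin n) (Fin n) ℤ) :
    genMut r k B * Matrix.diagonal r = stdMut k (B * Matrix.diagonal r) := by
  ext i j
  simp only [genMut, stdMut, Matrix.mul_diagonal, Matrix.of_apply]
  by_cases h : i = k ∨ j = k
  · simp [h, neg_mul]
  · simp only [h, if_false]
    have hj : (0:ℤ) ≤ r j := (hr j).le
    have hk : (0:ℤ) ≤ r k := (hr k).le
    have h1 : (-(B k j * r j) ⊔ 0) = (-B k j ⊔ 0) * r j := by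
      rw [max_mul_of_nonneg _ _ hj, zero_mul, neg_mul]
    have h2 : (B i k * r k ⊔ 0) = (B i k ⊔ 0) * r k := by
      rw [max_mul_of_nonneg _ _ hk, zero_mul]
    rw [h1, h2]; ring

lemma foldl_gen_eq_std {n : ℕ} (r : Fin n → ℤ) (hr : ∀ i, 0 < r i) (w : List (Fin n)) :
    ∀ (D B : Matrix (Fin n) (Fin n) ℤ),
    (w.foldl (fun p k => genStep r k p) (D, B)).1 =
      (w.foldl (fun p k => stdStep k p) (D, B * Matrix.diagonal r)).1 := by
  induction w with
  | nil => intro D B; rfl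
  | cons k ws ih =>
    intro D B
    simp only [List.foldl_cons]
    have hw : (fun l => B l k * r k) = fun l => (B * Matrix.diagonal r) l k := by
      funext l; simp [Matrix.mul_diagonal]
    show ((ws.foldl (fun p k => genStep r k p)
        (dStep k (fun l => B l k * r k) D, genMut r k B))).1 = _
    rw [hw, ih]
    rw [genMut_mul_diagonal r hr]
    rfl

/-- the d-vectors of an `(R,Z)`-cluster pattern with initial exchange
matrix `B` coincide with the d-vectors of the standard cluster pattern with initial
exchange matrix `B·R`: starting from the same initial condition `D = -I` and applying
any sequence of mutations (a vertex of the `n`-regular tree), the resulting D-matrices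
are equal. -/
theorem dvectors_gen_eq_std (n : ℕ) (r : Fin n → ℤ) (hr : ∀ i, 0 < r i)
    (B : Matrix (Fin n) (Fin n) ℤ)
    (t : Fin n → ℤ) (ht : ∀ i, 0 < t i)
    (hskew : ((Matrix.diagonal t) * B)ᵀ = -((Matrix.diagonal t) * B))
    (w : List (Fin n)) :
    (w.foldl (fun p k => genStep r k p) (-1, B)).1 =
      (w.foldl (fun p k => stdStep k p) (-1, B * Matrix.diagonal r)).1 := by
  exact foldl_gen_eq_std r hr w (-1) B
end
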